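/- arXiv:cs/0703076 — 3 statements merged into one kernel-verified Lean document; each statement's English description precedes it below -/
import Mathlib

section
/- For every integer interval i = [a,b] with a ≤ b, every interval affine form l = [a₀,b₀] + Σₖ [aₖ,bₖ]×Vₖ over ℤ, and every environment ρ : 𝒱 → ℤ, the symbolic multiplication i ⊠ l := (i ×ᴵ [a₀,b₀]) + Σₖ (i ×ᴵ [aₖ,bₖ])×Vₖ is sound: { x·y | x ∈ ℤ, a ≤ x ≤ b, y ∈ ⟦l⟧(ρ) } ⊆ ⟦i ⊠ l⟧(ρ). -/
/-! If `y = c₀ + Σₖ cₖ·ρ(Vₖ)` with `cⱼ ∈ [aⱼ,bⱼ]`, then `x·y = x·c₀ + Σₖ (x·cₖ)·ρ(Vₖ)` and each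
`x·cⱼ` lies in `[α,β] ×ᴵ [aⱼ,bⱼ]`: a product is monotone in each factor once the sign of the other
is fixed, so it is squeezed between products of endpoints. -/

/-- Semantics of the interval affine form `[a₀,b₀] + Σₖ [aₖ,bₖ]×Vₖ` over ℤ in
the environment `ρ`: `{ c₀ + Σₖ cₖ·ρ(Vₖ) | ∀j, cⱼ ∈ ℤ, aⱼ ≤ cⱼ ≤ bⱼ }`. -/
def asemZ {n : ℕ} (a₀ b₀ : ℤ) (a b : Fin n → ℤ) (ρ : Fin n → ℤ) : Set ℤ :=
  {x | ∃ (c₀ : ℤ) (c : Fin n → ℤ),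
        (a₀ ≤ c₀ ∧ c₀ ≤ b₀) ∧ (∀ k, a k ≤ c k ∧ c k ≤ b k) ∧
        x = c₀ + ∑ k, c k * ρ k}

/-- Lower bound of the integer interval product `[a,b] ×ᴵ [a',b']`. -/
def imulLoZ (a b a' b' : ℤ) : ℤ :=
  min (min (a * a') (a * b')) (min (b * a') (b * b'))

/-- Upper bound of the integer interval product `[a,b] ×ᴵ [a',b']`. -/
def imulHiZ (a b a' b' : ℤ) : ℤ :=
  max (max (a * a') (a * b')) (max (b * a') (b * b'))

open Set

section EndpointBounds

variable {R : Type*} [Ring R] [LinearOrder R] [IsStrictOrderedRing R] {a b x : R}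

theorem min_mul_le_mul_of_mem_Icc (hx : x ∈ Icc a b) (y : R) : min (a * y) (b * y) ≤ x * y := by
  rcases le_total 0 y with hy | hy
  · exact min_le_of_left_le (mul_le_mul_of_nonneg_right hx.1 hy)
  · exact min_le_of_right_le (mul_le_mul_of_nonpos_right hx.2 hy)

theorem mul_le_max_mul_of_mem_Icc (hx : x ∈ Icc a b) (y : R) : x * y ≤ max (a * y) (b * y) := by
  rcases le_total 0 y with hy | hy
  · exact le_max_of_le_right (mul_le_mul_of_nonneg_right hx.2 hy)
  · exact le_max_of_le_left (mul_le_mul_of_nonpos_right hx.1 hy)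

theorem min_mul_le_mul_of_mem_Icc' (hx : x ∈ Icc a b) (y : R) : min (y * a) (y * b) ≤ y * x := by
  rcases le_total 0 y with hy | hy
  · exact min_le_of_left_le (mul_le_mul_of_nonneg_left hx.1 hy)
  · exact min_le_of_right_le (mul_le_mul_of_nonpos_left hx.2 hy)

theorem mul_le_max_mul_of_mem_Icc' (hx : x ∈ Icc a b) (y : R) : y * x ≤ max (y * a) (y * b) := by
  rcases le_total 0 y with hy | hy
  · exact le_max_of_le_right (mul_le_mul_of_nonneg_left hx.2 hy)
  · exact le_max_of_le_left (mul_le_mul_of_nonpos_left hx.1 hy)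

end EndpointBounds

theorem mul_mem_Icc_imulLoZ_imulHiZ {α β c d x y : ℤ} (hx : x ∈ Icc α β) (hy : y ∈ Icc c d) :
    x * y ∈ Icc (imulLoZ α β c d) (imulHiZ α β c d) :=
  ⟨calc imulLoZ α β c d ≤ min (α * y) (β * y) :=
          min_le_min (min_mul_le_mul_of_mem_Icc' hy α) (min_mul_le_mul_of_mem_Icc' hy β)
      _ ≤ x * y := min_mul_le_mul_of_mem_Icc hx y,
    calc x * y ≤ max (α * y) (β * y) := mul_le_max_mul_of_mem_Icc hx y
      _ ≤ imulHiZ α β c d :=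
          max_le_max (mul_le_max_mul_of_mem_Icc' hy α) (mul_le_max_mul_of_mem_Icc' hy β)⟩

theorem affine_smul_sound_int_general {n : ℕ} (α β a₀ b₀ : ℤ) (a b : Fin n → ℤ)
    (ρ : Fin n → ℤ) :
    {z | ∃ x : ℤ, α ≤ x ∧ x ≤ β ∧ ∃ y ∈ asemZ a₀ b₀ a b ρ, z = x * y} ⊆
      asemZ (imulLoZ α β a₀ b₀) (imulHiZ α β a₀ b₀)
        (fun k => imulLoZ α β (a k) (b k))
        (fun k => imulHiZ α β (a k) (b k)) ρ := by
  rintro _ ⟨x, hxα, hxβ, _, ⟨c₀, c, hc₀, hc, rfl⟩, rfl⟩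
  have hx : x ∈ Icc α β := ⟨hxα, hxβ⟩
  refine ⟨x * c₀, fun k => x * c k, mul_mem_Icc_imulLoZ_imulHiZ hx hc₀,
    fun k => mul_mem_Icc_imulLoZ_imulHiZ hx (hc k), ?_⟩
  simp only [mul_add, Finset.mul_sum, mul_assoc]

/-- over ℤ, the symbolic multiplication `i ⊠ l` of an interval
affine form `l` by an integer interval `i = [α,β]`, obtained by multiplying
every constant and coefficient interval of `l` by `i` using interval
multiplication, is sound:
`{ x·y | x ∈ ℤ, α ≤ x ≤ β, y ∈ ⟦l⟧(ρ) } ⊆ ⟦i ⊠ l⟧(ρ)`. -/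
theorem affine_smul_sound_int {n : ℕ} (α β a₀ b₀ : ℤ) (a b : Fin n → ℤ)
    (hi : α ≤ β) (h₀ : a₀ ≤ b₀) (h : ∀ k, a k ≤ b k) (ρ : Fin n → ℤ) :
    {z | ∃ x : ℤ, α ≤ x ∧ x ≤ β ∧ ∃ y ∈ asemZ a₀ b₀ a b ρ, z = x * y} ⊆
      asemZ (imulLoZ α β a₀ b₀) (imulHiZ α β a₀ b₀)
        (fun k => imulLoZ α β (a k) (b k))
        (fun k => imulHiZ α β (a k) (b k)) ρ :=
  affine_smul_sound_int_general α β a₀ b₀ a b ρ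
end

section
/- Linearization is sound: let B assign to each variable Vₖ a real interval [loₖ, hiₖ] with loₖ ≤ hiₖ, and define the linearization ⌊e⌋(B) of an expression e by structural induction: ⌊V⌋(B) = [1,1]×V; ⌊[a,b]⌋(B) = [a,b]; ⌊e₁+e₂⌋(B) = ⌊e₁⌋(B) ⊞ ⌊e₂⌋(B); ⌊e₁−e₂⌋(B) = ⌊e₁⌋(B) ⊟ ⌊e₂⌋(B); ⌊e₁/e₂⌋(B) = ⌊e₁⌋(B) ⊘ ι(⌊e₂⌋(B))(B); ⌊e₁×e₂⌋(B) = ι(⌊e₁⌋(B))(B) ⊠ ⌊e₂⌋(B). Then for every expression e and every environment ρ : 𝒱 → ℝ with loₖ ≤ ρ(Vₖ) ≤ hiₖ for all k, one has ⟦e⟧(ρ) ⊆ ⟦⌊e⌋(B)⟧(ρ). -/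
/-!
Induction on the expression, carrying for each value `x ∈ ⟦e⟧(ρ)` real coefficients that
witness `x ∈ ⟦⌊e⌋(B)⟧(ρ)`. Every interval operation is inclusion-sound over `EReal`: if
`x ∈ [a,b]` and `y ∈ [c,d]` then `x ⋄ y ∈ [a,b] ⋄ᴵ [c,d]`, so the witnesses of `e₁ ⋄ e₂` are
combined coefficientwise. For `×` and `/`, soundness of `ι` on the box `B` places the value of
the intervalized operand inside `ι(⌊eᵢ⌋)(B)`, and that real number then scales every witness
coefficient of the other operand.
-/

open scoped Classical

/-- Arithmetic expressions over the variables `V₁,…,Vₙ`: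
`e ::= Vₖ | [a,b] | e+e | e−e | e×e | e/e`. -/
inductive Expr (n : ℕ) where
  | var : Fin n → Expr n
  | itv : ℝ → ℝ → Expr n
  | add : Expr n → Expr n → Expr n
  | sub : Expr n → Expr n → Expr n
  | mul : Expr n → Expr n → Expr n
  | div : Expr n → Expr n → Expr n

/-- Set-valued concrete semantics of expressions. -/
def sem {n : ℕ} : Expr n → (Fin n → ℝ) → Set ℝ
  | .var X, ρ => {ρ X}
  | .itv a b, _ => Set.Icc a b
  | .add e₁ e₂, ρ => {z | ∃ x ∈ sem e₁ ρ, ∃ y ∈ sem e₂ ρ, z = x + y}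
  | .sub e₁ e₂, ρ => {z | ∃ x ∈ sem e₁ ρ, ∃ y ∈ sem e₂ ρ, z = x - y}
  | .mul e₁ e₂, ρ => {z | ∃ x ∈ sem e₁ ρ, ∃ y ∈ sem e₂ ρ, z = x * y}
  | .div e₁ e₂, ρ => {z | ∃ x ∈ sem e₁ ρ, ∃ y ∈ sem e₂ ρ, y ≠ 0 ∧ z = x / y}

/-- An interval with extended-real bounds (`[−∞,+∞]` coefficients are allowed,
so that dividing by an interval containing `0` yields the unconstrained form). -/
abbrev EItv : Type := EReal × EReal

/-- Interval addition `[a,b] +ᴵ [a',b'] = [a+a', b+b']`. -/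
noncomputable def iadd (p q : EItv) : EItv := (p.1 + q.1, p.2 + q.2)

/-- Interval subtraction `[a,b] −ᴵ [a',b'] = [a−b', b−a']`. -/
noncomputable def isub (p q : EItv) : EItv := (p.1 - q.2, p.2 - q.1)

/-- Interval multiplication
`[a,b] ×ᴵ [a',b'] = [min(aa',ab',ba',bb'), max(aa',ab',ba',bb')]`. -/
noncomputable def imul (p q : EItv) : EItv :=
  (min (min (p.1 * q.1) (p.1 * q.2)) (min (p.2 * q.1) (p.2 * q.2)),
   max (max (p.1 * q.1) (p.1 * q.2)) (max (p.2 * q.1) (p.2 * q.2)))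

/-- Interval division: the whole line `[−∞,+∞]` when `0` lies in the
denominator interval, and
`[min(a/a',a/b',b/a',b/b'), max(a/a',a/b',b/a',b/b')]` otherwise. -/
noncomputable def idiv (p q : EItv) : EItv :=
  if q.1 ≤ 0 ∧ 0 ≤ q.2 then (⊥, ⊤)
  else
    (min (min (p.1 / q.1) (p.1 / q.2)) (min (p.2 / q.1) (p.2 / q.2)),
     max (max (p.1 / q.1) (p.1 / q.2)) (max (p.2 / q.1) (p.2 / q.2)))

/-- An interval affine form `i₀ + Σₖ iₖ×Vₖ` whose constant and coefficient
intervals have extended-real bounds. -/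
structure AffForm (n : ℕ) where
  const : EItv
  coeff : Fin n → EItv

/-- Semantics of an interval affine form in the environment `ρ`:
`{ c₀ + Σₖ cₖ·ρ(Vₖ) | ∀j, cⱼ real, cⱼ within the j-th interval }`. -/
def AffForm.sem {n : ℕ} (l : AffForm n) (ρ : Fin n → ℝ) : Set ℝ :=
  {x | ∃ (c₀ : ℝ) (c : Fin n → ℝ),
        (l.const.1 ≤ (c₀ : EReal) ∧ (c₀ : EReal) ≤ l.const.2) ∧
        (∀ k, (l.coeff k).1 ≤ (c k : EReal) ∧ (c k : EReal) ≤ (l.coeff k).2) ∧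
        x = c₀ + ∑ k, c k * ρ k}

/-- `l₁ ⊞ l₂`: componentwise interval addition of affine forms. -/
noncomputable def AffForm.add {n : ℕ} (l m : AffForm n) : AffForm n :=
  ⟨iadd l.const m.const, fun k => iadd (l.coeff k) (m.coeff k)⟩

/-- `l₁ ⊟ l₂`: componentwise interval subtraction of affine forms. -/
noncomputable def AffForm.sub {n : ℕ} (l m : AffForm n) : AffForm n :=
  ⟨isub l.const m.const, fun k => isub (l.coeff k) (m.coeff k)⟩

/-- `i ⊠ l`: multiplication of every interval of `l` by the interval `i`. -/
noncomputable def AffForm.smul {n : ℕ} (i : EItv) (l : AffForm n) : AffForm n :=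
  ⟨imul i l.const, fun k => imul i (l.coeff k)⟩

/-- `l ⊘ i`: division of every interval of `l` by the interval `i`. -/
noncomputable def AffForm.div {n : ℕ} (l : AffForm n) (i : EItv) : AffForm n :=
  ⟨idiv l.const i, fun k => idiv (l.coeff k) i⟩

/-- Intervalization `ι(l)(B) = i₀ +ᴵ Σᴵₖ (iₖ ×ᴵ [loₖ,hiₖ])`: evaluation of the
affine form `l` to a single interval using interval arithmetic and the
variable bounds `B`. -/
noncomputable def AffForm.iota {n : ℕ} (l : AffForm n) (B : Fin n → ℝ × ℝ) :
    EItv :=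
  (l.const.1 + ∑ k, (imul (l.coeff k) (((B k).1 : EReal), ((B k).2 : EReal))).1,
   l.const.2 + ∑ k, (imul (l.coeff k) (((B k).1 : EReal), ((B k).2 : EReal))).2)

/-- The linearization `⌊e⌋(B)` of an expression `e` under the variable bounds
`B`, defined by structural induction: `⌊V⌋ = [1,1]×V`; `⌊[a,b]⌋ = [a,b]`;
`+`/`−` map to `⊞`/`⊟`; `⌊e₁/e₂⌋ = ⌊e₁⌋ ⊘ ι(⌊e₂⌋)(B)`; and
`⌊e₁×e₂⌋ = ι(⌊e₁⌋)(B) ⊠ ⌊e₂⌋` (the left argument is intervalized). -/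
noncomputable def lin {n : ℕ} (B : Fin n → ℝ × ℝ) : Expr n → AffForm n
  | .var X => ⟨(0, 0), fun k => if k = X then (1, 1) else (0, 0)⟩
  | .itv a b => ⟨((a : EReal), (b : EReal)), fun _ => (0, 0)⟩
  | .add e₁ e₂ => (lin B e₁).add (lin B e₂)
  | .sub e₁ e₂ => (lin B e₁).sub (lin B e₂)
  | .mul e₁ e₂ => AffForm.smul ((lin B e₁).iota B) (lin B e₂)
  | .div e₁ e₂ => (lin B e₁).div ((lin B e₂).iota B)

open Set

namespace EReal

lemma coe_finset_sum {ι : Type*} (s : Finset ι) (f : ι → ℝ) :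
    ((∑ i ∈ s, f i : ℝ) : EReal) = ∑ i ∈ s, (f i : EReal) :=
  map_sum (⟨⟨(↑), coe_zero⟩, coe_add⟩ : ℝ →+ EReal) f s

lemma mul_mem_Icc_min_max {a c d y : EReal} (hy : y ∈ Icc c d) :
    a * y ∈ Icc (min (a * c) (a * d)) (max (a * c) (a * d)) := by
  rcases le_total 0 a with ha | ha
  · exact ⟨(min_le_left _ _).trans (mul_le_mul_of_nonneg_left hy.1 ha),
      (mul_le_mul_of_nonneg_left hy.2 ha).trans (le_max_right _ _)⟩
  · have anti : ∀ {u v : EReal}, u ≤ v → a * v ≤ a * u := fun huv => by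
      rw [mul_comm a, mul_comm a]; exact mul_le_mul_of_nonpos_right huv ha
    exact ⟨(min_le_right _ _).trans (anti hy.2), (anti hy.1).trans (le_max_left _ _)⟩

lemma inv_mem_Icc_of_pos {c d y : EReal} (hc : 0 < c) (hy : y ∈ Icc c d) :
    y⁻¹ ∈ Icc d⁻¹ c⁻¹ :=
  have hy₀ : 0 < y := hc.trans_le hy.1
  ⟨inv_strictAntiOn.antitoneOn hy₀ (hy₀.trans_le hy.2) hy.2,
    inv_strictAntiOn.antitoneOn hc hy₀ hy.1⟩

lemma inv_mem_Icc {c d y : EReal} (h : ¬(c ≤ 0 ∧ 0 ≤ d)) (hy : y ∈ Icc c d) :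
    y⁻¹ ∈ Icc d⁻¹ c⁻¹ := by
  rcases not_and_or.mp h with hc | hd
  · exact inv_mem_Icc_of_pos (not_le.mp hc) hy
  · have hd' : 0 < -d := EReal.neg_pos.mpr (not_le.mp hd)
    have := inv_mem_Icc_of_pos hd' ⟨EReal.neg_le_neg_iff.mpr hy.2, EReal.neg_le_neg_iff.mpr hy.1⟩
    simp only [inv_neg, mem_Icc, EReal.neg_le_neg_iff] at this
    exact ⟨this.2, this.1⟩

end EReal

lemma add_mem_iadd {p q : EItv} {x y : EReal} (hx : x ∈ Icc p.1 p.2) (hy : y ∈ Icc q.1 q.2) :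
    x + y ∈ Icc (iadd p q).1 (iadd p q).2 :=
  ⟨add_le_add hx.1 hy.1, add_le_add hx.2 hy.2⟩

lemma sub_mem_isub {p q : EItv} {x y : EReal} (hx : x ∈ Icc p.1 p.2) (hy : y ∈ Icc q.1 q.2) :
    x - y ∈ Icc (isub p q).1 (isub p q).2 :=
  ⟨EReal.sub_le_sub hx.1 hy.2, EReal.sub_le_sub hx.2 hy.1⟩

lemma mul_mem_imul {p q : EItv} {x y : EReal} (hx : x ∈ Icc p.1 p.2) (hy : y ∈ Icc q.1 q.2) :
    x * y ∈ Icc (imul p q).1 (imul p q).2 := by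
  obtain ⟨h₁l, h₁u⟩ := EReal.mul_mem_Icc_min_max (a := p.1) hy
  obtain ⟨h₂l, h₂u⟩ := EReal.mul_mem_Icc_min_max (a := p.2) hy
  rcases le_total 0 y with hy₀ | hy₀
  · exact ⟨(min_le_left _ _).trans (h₁l.trans (mul_le_mul_of_nonneg_right hx.1 hy₀)),
      (mul_le_mul_of_nonneg_right hx.2 hy₀).trans (h₂u.trans (le_max_right _ _))⟩
  · exact ⟨(min_le_right _ _).trans (h₂l.trans (EReal.mul_le_mul_of_nonpos_right hx.2 hy₀)),
      (EReal.mul_le_mul_of_nonpos_right hx.1 hy₀).trans (h₁u.trans (le_max_left _ _))⟩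

lemma div_mem_idiv {p q : EItv} {x y : EReal} (hx : x ∈ Icc p.1 p.2) (hy : y ∈ Icc q.1 q.2) :
    x / y ∈ Icc (idiv p q).1 (idiv p q).2 := by
  unfold idiv
  split_ifs with h
  · exact ⟨bot_le, le_top⟩
  · -- `x / y = x * y⁻¹`, and off zero `idiv p q` is `imul p (q.2⁻¹, q.1⁻¹)` up to the order
    -- of the arguments of `min` and `max`.
    have := mul_mem_imul (q := (q.2⁻¹, q.1⁻¹)) hx (EReal.inv_mem_Icc h hy)
    simpa only [imul, div_eq_mul_inv, min_comm (p.1 * q.1⁻¹), min_comm (p.2 * q.1⁻¹),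
      max_comm (p.1 * q.1⁻¹), max_comm (p.2 * q.1⁻¹)] using this

namespace AffForm

variable {n : ℕ} {ρ : Fin n → ℝ} {l m : AffForm n} {x y : ℝ}

lemma add_mem_sem_add (hx : x ∈ l.sem ρ) (hy : y ∈ m.sem ρ) : x + y ∈ (l.add m).sem ρ := by
  obtain ⟨c₀, c, hc₀, hc, rfl⟩ := hx
  obtain ⟨d₀, d, hd₀, hd, rfl⟩ := hy
  refine ⟨c₀ + d₀, c + d, add_mem_iadd hc₀ hd₀, fun k => add_mem_iadd (hc k) (hd k), ?_⟩
  simp only [Pi.add_apply, add_mul, Finset.sum_add_distrib]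
  ring

lemma sub_mem_sem_sub (hx : x ∈ l.sem ρ) (hy : y ∈ m.sem ρ) : x - y ∈ (l.sub m).sem ρ := by
  obtain ⟨c₀, c, hc₀, hc, rfl⟩ := hx
  obtain ⟨d₀, d, hd₀, hd, rfl⟩ := hy
  refine ⟨c₀ - d₀, c - d, sub_mem_isub hc₀ hd₀, fun k => sub_mem_isub (hc k) (hd k), ?_⟩
  simp only [Pi.sub_apply, sub_mul, Finset.sum_sub_distrib]
  ring

lemma mul_mem_sem_smul {i : EItv} (hx : (x : EReal) ∈ Icc i.1 i.2) (hy : y ∈ l.sem ρ) :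
    x * y ∈ (smul i l).sem ρ := by
  obtain ⟨d₀, d, hd₀, hd, rfl⟩ := hy
  refine ⟨x * d₀, x • d, mul_mem_imul hx hd₀, fun k => mul_mem_imul hx (hd k), ?_⟩
  simp only [Pi.smul_apply, smul_eq_mul, mul_add, Finset.mul_sum, mul_assoc]

lemma div_mem_sem_div {i : EItv} (hx : x ∈ l.sem ρ) (hy : (y : EReal) ∈ Icc i.1 i.2) :
    x / y ∈ (l.div i).sem ρ := by
  obtain ⟨c₀, c, hc₀, hc, rfl⟩ := hx
  refine ⟨c₀ / y, fun k => c k / y, div_mem_idiv hc₀ hy, fun k => div_mem_idiv (hc k) hy, ?_⟩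
  simp only [add_div, Finset.sum_div, div_mul_eq_mul_div]

lemma mem_Icc_iota (B : Fin n → ℝ × ℝ) (hρ : ∀ k, (B k).1 ≤ ρ k ∧ ρ k ≤ (B k).2)
    (hx : x ∈ l.sem ρ) : (x : EReal) ∈ Icc (l.iota B).1 (l.iota B).2 := by
  obtain ⟨c₀, c, hc₀, hc, rfl⟩ := hx
  have hterm : ∀ k, ((c k * ρ k : ℝ) : EReal) ∈
      Icc (imul (l.coeff k) ((B k).1, (B k).2)).1 (imul (l.coeff k) ((B k).1, (B k).2)).2 :=
    fun k => mul_mem_imul (y := ρ k) (hc k) ⟨EReal.coe_le_coe (hρ k).1, EReal.coe_le_coe (hρ k).2⟩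
  rw [EReal.coe_add, EReal.coe_finset_sum]
  exact ⟨add_le_add hc₀.1 (Finset.sum_le_sum fun k _ => (hterm k).1),
    add_le_add hc₀.2 (Finset.sum_le_sum fun k _ => (hterm k).2)⟩

end AffForm

lemma mem_sem_lin_var {n : ℕ} (B : Fin n → ℝ × ℝ) (ρ : Fin n → ℝ) (X : Fin n) :
    ρ X ∈ (lin B (.var X)).sem ρ := by
  refine ⟨0, Pi.single X 1, by simp [lin], fun k => ?_, by simp [Pi.single_apply]⟩
  by_cases h : k = X <;> simp [lin, h]

lemma sem_lin_itv {n : ℕ} (B : Fin n → ℝ × ℝ) (ρ : Fin n → ℝ) {a b : ℝ} :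
    Icc a b ⊆ (lin B (.itv a b)).sem ρ := fun x hx =>
  ⟨x, 0, ⟨EReal.coe_le_coe hx.1, EReal.coe_le_coe hx.2⟩, fun _ => by simp [lin], by simp⟩

theorem linearization_sound_general {n : ℕ} (B : Fin n → ℝ × ℝ)
    (e : Expr n) (ρ : Fin n → ℝ)
    (hρ : ∀ k, (B k).1 ≤ ρ k ∧ ρ k ≤ (B k).2) :
    sem e ρ ⊆ (lin B e).sem ρ := by
  induction e with
  | var X => rintro _ rfl; exact mem_sem_lin_var B ρ X
  | itv a b => exact sem_lin_itv B ρ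
  | add e₁ e₂ ih₁ ih₂ =>
    rintro _ ⟨x, hx, y, hy, rfl⟩
    exact AffForm.add_mem_sem_add (ih₁ hx) (ih₂ hy)
  | sub e₁ e₂ ih₁ ih₂ =>
    rintro _ ⟨x, hx, y, hy, rfl⟩
    exact AffForm.sub_mem_sem_sub (ih₁ hx) (ih₂ hy)
  | mul e₁ e₂ ih₁ ih₂ =>
    rintro _ ⟨x, hx, y, hy, rfl⟩
    exact AffForm.mul_mem_sem_smul (AffForm.mem_Icc_iota B hρ (ih₁ hx)) (ih₂ hy)
  | div e₁ e₂ ih₁ ih₂ =>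
    rintro _ ⟨x, hx, y, hy, -, rfl⟩
    exact AffForm.div_mem_sem_div (ih₁ hx) (AffForm.mem_Icc_iota B hρ (ih₂ hy))

/-- linearization is sound. If `B` assigns to each variable `Vₖ`
an interval `[loₖ,hiₖ]` with `loₖ ≤ hiₖ`, then for every expression `e` and
every environment `ρ` with `loₖ ≤ ρ(Vₖ) ≤ hiₖ` for all `k`,
`⟦e⟧(ρ) ⊆ ⟦⌊e⌋(B)⟧(ρ)`. -/
theorem linearization_sound {n : ℕ} (B : Fin n → ℝ × ℝ)
    (hB : ∀ k, (B k).1 ≤ (B k).2) (e : Expr n) (ρ : Fin n → ℝ)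
    (hρ : ∀ k, (B k).1 ≤ ρ k ∧ ρ k ≤ (B k).2) :
    sem e ρ ⊆ (lin B e).sem ρ :=
  linearization_sound_general B e ρ hρ
end

section
/- The coefficient-averaging abstraction μ is sound: let l = [a₀,b₀] + Σₖ [aₖ,bₖ]×Vₖ be an interval affine form over ℝ with finite bounds, let [loₖ, hiₖ] (loₖ ≤ hiₖ) be bounds for each variable, and define μ(l) := ([a₀,b₀] +ᴵ Σᴵₖ ([(aₖ−bₖ)/2, (bₖ−aₖ)/2] ×ᴵ [loₖ,hiₖ])) + Σₖ ((aₖ+bₖ)/2)×Vₖ. Then for every environment ρ : 𝒱 → ℝ with loₖ ≤ ρ(Vₖ) ≤ hiₖ for all k, ⟦l⟧(ρ) ⊆ ⟦μ(l)⟧(ρ). -/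
/-- Semantics of the interval affine form `[a₀,b₀] + Σₖ [aₖ,bₖ]×Vₖ` over ℝ in
the environment `ρ`: `{ c₀ + Σₖ cₖ·ρ(Vₖ) | ∀j, aⱼ ≤ cⱼ ≤ bⱼ }`. -/
def asem {n : ℕ} (a₀ b₀ : ℝ) (a b : Fin n → ℝ) (ρ : Fin n → ℝ) : Set ℝ :=
  {x | ∃ (c₀ : ℝ) (c : Fin n → ℝ),
        (a₀ ≤ c₀ ∧ c₀ ≤ b₀) ∧ (∀ k, a k ≤ c k ∧ c k ≤ b k) ∧
        x = c₀ + ∑ k, c k * ρ k}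

/-- Lower bound of the interval product `[a,b] ×ᴵ [a',b']`. -/
def imulLo (a b a' b' : ℝ) : ℝ :=
  min (min (a * a') (a * b')) (min (b * a') (b * b'))

/-- Upper bound of the interval product `[a,b] ×ᴵ [a',b']`. -/
def imulHi (a b a' b' : ℝ) : ℝ :=
  max (max (a * a') (a * b')) (max (b * a') (b * b'))

/-- Lower bound of the interval quotient `[a,b] /ᴵ [a',b']` (for `0 ∉ [a',b']`). -/
noncomputable def idivLo (a b a' b' : ℝ) : ℝ :=
  min (min (a / a') (a / b')) (min (b / a') (b / b'))

/-- Upper bound of the interval quotient `[a,b] /ᴵ [a',b']` (for `0 ∉ [a',b']`). -/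
noncomputable def idivHi (a b a' b' : ℝ) : ℝ :=
  max (max (a / a') (a / b')) (max (b / a') (b / b'))

/-! The midpoint `mₖ = (aₖ+bₖ)/2` splits every admissible coefficient as `cₖ = mₖ + (cₖ - mₖ)`
with `cₖ - mₖ ∈ [(aₖ-bₖ)/2, (bₖ-aₖ)/2]`. Since `ρ(Vₖ) ∈ [loₖ, hiₖ]`, the interval product
bounds each error term `(cₖ - mₖ)·ρ(Vₖ)`, so they can all be absorbed into the constant part. -/

section MulBounds

variable {α : Type*} [CommRing α] [LinearOrder α] [IsStrictOrderedRing α]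

lemma min_mul_le_mul_of_mem_Icc_s10 {p lo hi r : α} (hr : r ∈ Set.Icc lo hi) :
    min (p * lo) (p * hi) ≤ p * r := by
  rcases le_total 0 p with hp | hp
  · exact (min_le_left _ _).trans (mul_le_mul_of_nonneg_left hr.1 hp)
  · exact (min_le_right _ _).trans (mul_le_mul_of_nonpos_left hr.2 hp)

lemma mul_le_max_mul_of_mem_Icc_s10 {p lo hi r : α} (hr : r ∈ Set.Icc lo hi) :
    p * r ≤ max (p * lo) (p * hi) := by
  rcases le_total 0 p with hp | hp
  · exact (mul_le_mul_of_nonneg_left hr.2 hp).trans (le_max_right _ _)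
  · exact (mul_le_mul_of_nonpos_left hr.1 hp).trans (le_max_left _ _)

end MulBounds

lemma sub_midpoint_mem_Icc {K : Type*} [Field K] [LinearOrder K] [IsStrictOrderedRing K]
    {a b c : K} (hc : c ∈ Set.Icc a b) :
    c - (a + b) / 2 ∈ Set.Icc ((a - b) / 2) ((b - a) / 2) := by
  constructor <;> linarith [hc.1, hc.2]

lemma imulLo_le_mul {p q lo hi t r : ℝ} (ht : t ∈ Set.Icc p q) (hr : r ∈ Set.Icc lo hi) :
    imulLo p q lo hi ≤ t * r := by
  rcases le_total 0 r with hr₀ | hr₀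
  · calc imulLo p q lo hi ≤ min (p * lo) (p * hi) := min_le_left _ _
      _ ≤ p * r := min_mul_le_mul_of_mem_Icc_s10 hr
      _ ≤ t * r := mul_le_mul_of_nonneg_right ht.1 hr₀
  · calc imulLo p q lo hi ≤ min (q * lo) (q * hi) := min_le_right _ _
      _ ≤ q * r := min_mul_le_mul_of_mem_Icc_s10 hr
      _ ≤ t * r := mul_le_mul_of_nonpos_right ht.2 hr₀

lemma mul_le_imulHi {p q lo hi t r : ℝ} (ht : t ∈ Set.Icc p q) (hr : r ∈ Set.Icc lo hi) :
    t * r ≤ imulHi p q lo hi := by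
  rcases le_total 0 r with hr₀ | hr₀
  · calc t * r ≤ q * r := mul_le_mul_of_nonneg_right ht.2 hr₀
      _ ≤ max (q * lo) (q * hi) := mul_le_max_mul_of_mem_Icc_s10 hr
      _ ≤ imulHi p q lo hi := le_max_right _ _
  · calc t * r ≤ p * r := mul_le_mul_of_nonpos_right ht.1 hr₀
      _ ≤ max (p * lo) (p * hi) := mul_le_max_mul_of_mem_Icc_s10 hr
      _ ≤ imulHi p q lo hi := le_max_left _ _

theorem mu_sound_general {n : ℕ} (a₀ b₀ : ℝ) (a b lo hi : Fin n → ℝ)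
    (ρ : Fin n → ℝ) (hρ : ∀ k, lo k ≤ ρ k ∧ ρ k ≤ hi k) :
    asem a₀ b₀ a b ρ ⊆
      {x | ∃ c : ℝ,
        a₀ + ∑ k, imulLo ((a k - b k) / 2) ((b k - a k) / 2) (lo k) (hi k)
            ≤ c ∧
        c ≤ b₀ + ∑ k, imulHi ((a k - b k) / 2) ((b k - a k) / 2) (lo k) (hi k) ∧
        x = c + ∑ k, ((a k + b k) / 2) * ρ k} := by
  rintro x ⟨c₀, c, ⟨hc₀a, hc₀b⟩, hc, rfl⟩
  have hdev k := sub_midpoint_mem_Icc (hc k)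
  refine ⟨c₀ + ∑ k, (c k - (a k + b k) / 2) * ρ k, ?_, ?_, ?_⟩
  · exact add_le_add hc₀a (Finset.sum_le_sum fun k _ => imulLo_le_mul (hdev k) (hρ k))
  · exact add_le_add hc₀b (Finset.sum_le_sum fun k _ => mul_le_imulHi (hdev k) (hρ k))
  · rw [add_assoc, ← Finset.sum_add_distrib]
    exact congrArg _ (Finset.sum_congr rfl fun k _ => by ring)

/-- the coefficient-averaging abstraction `μ` is sound. `μ(l)`
replaces each variable coefficient interval `[aₖ,bₖ]` by its midpoint
`(aₖ+bₖ)/2` and enlarges the constant interval to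
`[a₀,b₀] +ᴵ Σᴵₖ ([(aₖ−bₖ)/2, (bₖ−aₖ)/2] ×ᴵ [loₖ,hiₖ])`. For every environment
`ρ` within the bounds, `⟦l⟧(ρ) ⊆ ⟦μ(l)⟧(ρ)`, where the semantics of an affine
form with scalar coefficients `cₖ` and interval constant part `i` is
`{ c + Σₖ cₖ·ρ(Vₖ) | c ∈ i }`. -/
theorem mu_sound {n : ℕ} (a₀ b₀ : ℝ) (a b lo hi : Fin n → ℝ)
    (h₀ : a₀ ≤ b₀) (h : ∀ k, a k ≤ b k) (hB : ∀ k, lo k ≤ hi k)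
    (ρ : Fin n → ℝ) (hρ : ∀ k, lo k ≤ ρ k ∧ ρ k ≤ hi k) :
    asem a₀ b₀ a b ρ ⊆
      {x | ∃ c : ℝ,
        a₀ + ∑ k, imulLo ((a k - b k) / 2) ((b k - a k) / 2) (lo k) (hi k)
            ≤ c ∧
        c ≤ b₀ + ∑ k, imulHi ((a k - b k) / 2) ((b k - a k) / 2) (lo k) (hi k) ∧
        x = c + ∑ k, ((a k + b k) / 2) * ρ k} :=
  mu_sound_general a₀ b₀ a b lo hi ρ hρ
end
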